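/- Let k ≥ 2 and let A ∈ S(G_k) be a real symmetric matrix with exactly two distinct eigenvalues. Then each of the two eigenvalues of A occurs with multiplicity exactly k. -/

import Mathlib

open Matrix

/-- `SOfGraph G` is the set of real symmetric matrices whose off-diagonal zero
pattern is described by the graph `G` (diagonal entries unrestricted). -/
def SOfGraph {V : Type*} [Fintype V] [DecidableEq V] (G : SimpleGraph V) :
    Set (Matrix V V ℝ) :=
  {A | A.IsSymm ∧ ∀ i j : V, i ≠ j → (A i j ≠ 0 ↔ G.Adj i j)}

/-- `qGraph G` is the minimum number of distinct eigenvalues over matrices in `SOfGraph G`. -/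
noncomputable def qGraph {V : Type*} [Fintype V] [DecidableEq V] (G : SimpleGraph V) : ℕ :=
  sInf ((fun A => (spectrum ℝ A).ncard) '' SOfGraph G)

/-- Eccentricity of a vertex: maximum graph distance to any vertex. -/
noncomputable def graphEccent {V : Type*} [Fintype V] (G : SimpleGraph V) (v : V) : ℕ :=
  Finset.univ.sup fun w => G.dist v w

/-- Double-ended candle `G_k` on `2k` vertices: vertex `i` lies in level `(i+1)/2`,
so level `0` and level `k` have one vertex each and intermediate levels have two;
two vertices are adjacent iff they lie in consecutive levels. -/
def doubleCandle (k : ℕ) : SimpleGraph (Fin (2 * k)) :=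
  SimpleGraph.fromRel fun a b => (a.val + 1) / 2 + 1 = (b.val + 1) / 2

/-- Single-ended candle `G'_k` on `2k+1` vertices: vertex `i` lies in level `(i+1)/2`,
so level `0` has one vertex and levels `1,…,k` have two vertices each; two distinct
vertices are adjacent iff they lie in consecutive levels or both lie in level `k`. -/
def singleCandle (k : ℕ) : SimpleGraph (Fin (2 * k + 1)) :=
  SimpleGraph.fromRel fun a b =>
    (a.val + 1) / 2 + 1 = (b.val + 1) / 2 ∨ ((a.val + 1) / 2 = k ∧ (b.val + 1) / 2 = k)

/-!
Because `A` is symmetric with spectrum `{μ, ν}`, it satisfies `(A - μ)(A - ν) = 0`. In the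
candle, the vertices `2j` and `2j + 1` are adjacent and have no common neighbour, so the
`(2j, 2j + 1)` entry of this product reads `A (2j) (2j) + A (2j + 1) (2j + 1) = μ + ν`;
summing, `tr A = k (μ + ν)`. On the other hand `(A - μ) / (ν - μ)` is idempotent, so its trace
is its rank `2k - mult μ`, and comparing the two expressions for the trace gives `mult μ = k`.
-/

lemma sub_algebraMap_mul_sub_algebraMap_eq_zero {A : Type*} [Ring A] [StarRing A]
    [TopologicalSpace A] [Algebra ℝ A] [ContinuousFunctionalCalculus ℝ A IsSelfAdjoint]
    {a : A} (ha : IsSelfAdjoint a) {μ ν : ℝ} (hspec : spectrum ℝ a ⊆ {μ, ν}) :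
    (a - algebraMap ℝ A μ) * (a - algebraMap ℝ A ν) = 0 := by
  have hzero : cfc (fun x : ℝ => (x - μ) * (x - ν)) a = 0 := by
    rw [cfc_congr (g := 0), cfc_zero]
    intro x hx
    rcases hspec hx with rfl | rfl <;> simp
  rwa [cfc_mul .., cfc_sub .., cfc_sub .., cfc_id' .., cfc_const .., cfc_const ..] at hzero

open Module LinearMap in
lemma Matrix.trace_eq_finrank_range_of_isIdempotentElem {K n : Type*} [Field K] [Fintype n]
    [DecidableEq n] {P : Matrix n n K} (hP : IsIdempotentElem P) :
    P.trace = finrank K (range (toLin' P)) := by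
  have hproj : IsIdempotentElem (toLin' P) := by
    rw [IsIdempotentElem, Module.End.mul_eq_comp, ← toLin'_mul, hP.eq]
  rw [← hproj.isProj_range.trace, trace_eq_matrix_trace K (Pi.basisFun K n),
    toMatrix_eq_toMatrix', toMatrix'_toLin']

open Module LinearMap in
lemma Matrix.finrank_ker_sub_smul_one_mul_sub_eq {K n : Type*} [Field K] [Fintype n]
    [DecidableEq n] {A : Matrix n n K} {μ ν : K} (hμν : ν ≠ μ) (h : (A - μ • 1) * (A - ν • 1) = 0) :
    (finrank K (ker (toLin' (A - μ • 1))) : K) * (ν - μ) = Fintype.card n * ν - A.trace := by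
  have hνμ : ν - μ ≠ 0 := sub_ne_zero.mpr hμν
  set P := (ν - μ)⁻¹ • (A - μ • 1) with hP
  have hsq : (A - μ • 1) * (A - μ • 1) = (ν - μ) • (A - μ • 1) := by
    calc (A - μ • 1) * (A - μ • 1) = (A - μ • 1) * ((A - ν • 1) + (ν - μ) • 1) := by
          rw [sub_smul]; abel_nf
      _ = (ν - μ) • (A - μ • 1) := by rw [mul_add, h, zero_add, Matrix.mul_smul, mul_one]
  have hidem : IsIdempotentElem P := by
    rw [IsIdempotentElem, hP, smul_mul_smul_comm, hsq, smul_smul, mul_assoc,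
      inv_mul_cancel₀ hνμ, mul_one]
  have hker : ker (toLin' P) = ker (toLin' (A - μ • 1)) := by
    rw [hP, map_smul, ker_smul _ _ (inv_ne_zero hνμ)]
  have hrank := finrank_range_add_finrank_ker (toLin' P)
  rw [hker, finrank_fintype_fun_eq_card] at hrank
  have htrace : A.trace - μ * Fintype.card n = finrank K (range (toLin' P)) * (ν - μ) := by
    rw [← trace_eq_finrank_range_of_isIdempotentElem hidem, hP, trace_smul, trace_sub, trace_smul,
      trace_one, smul_eq_mul, smul_eq_mul]
    field_simp
  rw [← hrank, Nat.cast_add] at htrace ⊢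
  linear_combination htrace

lemma diag_add_diag_eq_of_mem_SOfGraph {V : Type*} [Fintype V] [DecidableEq V] {G : SimpleGraph V}
    {A : Matrix V V ℝ} (hA : A ∈ SOfGraph G) {a b : V} (hab : G.Adj a b)
    (hcommon : ∀ c, ¬(G.Adj a c ∧ G.Adj c b)) {μ ν : ℝ}
    (h : (A - μ • 1) * (A - ν • 1) = 0) :
    A a a + A b b = μ + ν := by
  have hne : a ≠ b := hab.ne
  have hentry : (A a a - μ) * A a b + A a b * (A b b - ν) = 0 := by
    have := congrFun (congrFun h a) b
    rw [mul_apply, Fintype.sum_eq_add a b hne] at this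
    · simpa [one_apply_ne hne, one_apply_ne hne.symm] using this
    intro c ⟨hca, hcb⟩
    simp only [Matrix.sub_apply, Matrix.smul_apply, one_apply_ne hca.symm, one_apply_ne hcb,
      smul_zero, sub_zero]
    by_contra hprod
    obtain ⟨hac, hcb'⟩ := mul_ne_zero_iff.mp hprod
    exact hcommon c ⟨(hA.2 a c hca.symm).mp hac, (hA.2 c b hcb).mp hcb'⟩
  have hab0 : A a b ≠ 0 := (hA.2 a b hne).mpr hab
  have : A a b * (A a a + A b b - (μ + ν)) = 0 := by linear_combination hentry
  linarith [(mul_eq_zero.mp this).resolve_left hab0]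

/-- Swaps `2j` and `2j + 1`, which lie in the consecutive levels `j` and `j + 1` of the candle. -/
def candlePartner (k : ℕ) (i : Fin (2 * k)) : Fin (2 * k) :=
  ⟨if i.val % 2 = 0 then i.val + 1 else i.val - 1, by split_ifs <;> omega⟩

lemma candlePartner_involutive (k : ℕ) : Function.Involutive (candlePartner k) := by
  intro i
  ext
  simp only [candlePartner]
  split_ifs <;> omega

lemma doubleCandle_adj_candlePartner (k : ℕ) (i : Fin (2 * k)) :
    (doubleCandle k).Adj i (candlePartner k i) := by
  simp only [doubleCandle, SimpleGraph.fromRel_adj, candlePartner, ne_eq, Fin.ext_iff]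
  split_ifs <;> omega

lemma doubleCandle_not_adj_adj_candlePartner (k : ℕ) (i c : Fin (2 * k)) :
    ¬((doubleCandle k).Adj i c ∧ (doubleCandle k).Adj c (candlePartner k i)) := by
  simp only [doubleCandle, SimpleGraph.fromRel_adj, candlePartner, ne_eq, Fin.ext_iff]
  split_ifs <;> omega

lemma trace_eq_of_mem_SOfGraph_doubleCandle {k : ℕ} {A : Matrix (Fin (2 * k)) (Fin (2 * k)) ℝ}
    (hA : A ∈ SOfGraph (doubleCandle k)) {μ ν : ℝ} (h : (A - μ • 1) * (A - ν • 1) = 0) :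
    A.trace = k * (μ + ν) := by
  let σ := (candlePartner_involutive k).toPerm
  have hpair (i : Fin (2 * k)) : A i i + A (σ i) (σ i) = μ + ν :=
    diag_add_diag_eq_of_mem_SOfGraph hA (doubleCandle_adj_candlePartner k i)
      (doubleCandle_not_adj_adj_candlePartner k i) h
  have : 2 * A.trace = 2 * (k * (μ + ν)) := by
    calc 2 * A.trace = ∑ i, (A i i + A (σ i) (σ i)) := by
          rw [Finset.sum_add_distrib, Equiv.sum_comp σ (fun i => A i i), two_mul]; rfl
      _ = 2 * (k * (μ + ν)) := by
          simp only [hpair, Finset.sum_const, Finset.card_univ, Fintype.card_fin, nsmul_eq_mul,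
            Nat.cast_mul, Nat.cast_ofNat]
          ring
  linarith

lemma Set.exists_ne_subset_pair_of_ncard_eq_two {α : Type*} {s : Set α} (hs : s.ncard = 2)
    {a : α} (ha : a ∈ s) : ∃ b, b ≠ a ∧ s ⊆ {a, b} := by
  obtain ⟨x, y, hxy, rfl⟩ := Set.ncard_eq_two.mp hs
  rcases ha with rfl | rfl
  · exact ⟨y, hxy.symm, subset_rfl⟩
  · exact ⟨x, hxy, (Set.pair_comm _ _).subset⟩

theorem stmt19_general (k : ℕ)
    (A : Matrix (Fin (2 * k)) (Fin (2 * k)) ℝ)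
    (hA : A ∈ SOfGraph (doubleCandle k))
    (hspec : (spectrum ℝ A).ncard = 2) :
    ∀ μ ∈ spectrum ℝ A,
      Module.finrank ℝ (LinearMap.ker (Matrix.toLin' (A - μ • 1))) = k := by
  intro μ hμ
  obtain ⟨ν, hνμ, hpair⟩ := Set.exists_ne_subset_pair_of_ncard_eq_two hspec hμ
  have hherm : A.IsHermitian := isHermitian_iff_isSymm.mpr hA.1
  have hann : (A - μ • 1) * (A - ν • 1) = 0 := by
    simpa [Algebra.algebraMap_eq_smul_one] using
      sub_algebraMap_mul_sub_algebraMap_eq_zero hherm hpair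
  have hmult := finrank_ker_sub_smul_one_mul_sub_eq hνμ hann
  rw [trace_eq_of_mem_SOfGraph_doubleCandle hA hann, Fintype.card_fin] at hmult
  have : (Module.finrank ℝ (LinearMap.ker (toLin' (A - μ • 1))) : ℝ) * (ν - μ) =
      k * (ν - μ) := by
    rw [hmult]; push_cast; ring
  exact_mod_cast mul_right_cancel₀ (sub_ne_zero.mpr hνμ) this

/-- If `k ≥ 2` and `A ∈ S(G_k)` has exactly two distinct eigenvalues, then each
eigenvalue of `A` has multiplicity exactly `k`. -/
theorem stmt19 (k : ℕ) (hk : 2 ≤ k)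
    (A : Matrix (Fin (2 * k)) (Fin (2 * k)) ℝ)
    (hA : A ∈ SOfGraph (doubleCandle k))
    (hspec : (spectrum ℝ A).ncard = 2) :
    ∀ μ ∈ spectrum ℝ A,
      Module.finrank ℝ (LinearMap.ker (Matrix.toLin' (A - μ • 1))) = k :=
  stmt19_general k A hA hspec
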